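/- Let f(x) = e^x/(1+e^x) and c_k < c_{k+1}. Define P(k) and P(k+1) as the consecutive stick-breaking category probabilities with common positive prefix C. If v < c_k - ln(1 - e^{-(c_{k+1}-c_k)}), then P(k+1) < P(k). -/

import Mathlib

noncomputable def sigmoid (x : ℝ) : ℝ := Real.exp x / (1 + Real.exp x)

/-!
Writing `a = c_k - v` and `b = c_{k+1} - v`, one has `1 - f(a) = f(a) e^{-a}`, so `P(k+1) < P(k)`
amounts to `f(b) < e^a`, i.e. `1 < e^a + e^{a-b}`. The threshold on `v` says exactly
`1 - e^{a-b} < e^a`.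
-/

lemma sigmoid_pos (x : ℝ) : 0 < sigmoid x := by
  unfold sigmoid; positivity

lemma one_sub_sigmoid (x : ℝ) : 1 - sigmoid x = sigmoid x * Real.exp (-x) := by
  unfold sigmoid
  rw [Real.exp_neg]
  field_simp
  ring

lemma sigmoid_lt_exp_of_one_lt {a b : ℝ} (h : 1 < Real.exp a + Real.exp (a - b)) :
    sigmoid b < Real.exp a := by
  have h' : Real.exp b < Real.exp (a + b) + Real.exp a := by
    have := mul_lt_mul_of_pos_right h (Real.exp_pos b)
    rwa [one_mul, add_mul, ← Real.exp_add, ← Real.exp_add, sub_add_cancel] at this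
  rw [sigmoid, div_lt_iff₀ (by positivity), mul_one_add, ← Real.exp_add]
  linarith

lemma one_sub_sigmoid_mul_lt_sigmoid {a b : ℝ} (h : sigmoid b < Real.exp a) :
    (1 - sigmoid a) * sigmoid b < sigmoid a := by
  have h' : Real.exp (-a) * sigmoid b < 1 := by
    rw [Real.exp_neg, inv_mul_lt_iff₀ (Real.exp_pos a), mul_one]
    exact h
  rw [one_sub_sigmoid, mul_assoc]
  exact mul_lt_of_lt_one_right (sigmoid_pos a) h'

theorem stmt_18_general (ck ckk v C : ℝ) (hC : 0 < C)
    (hv : v < ck - Real.log (1 - Real.exp (-(ckk - ck)))) :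
    C * ((1 - sigmoid (ck - v)) * sigmoid (ckk - v)) < C * sigmoid (ck - v) := by
  have hthreshold : 1 - Real.exp ((ck - v) - (ckk - v)) < Real.exp (ck - v) :=
    Real.lt_exp_of_log_lt (by rw [show (ck - v) - (ckk - v) = -(ckk - ck) by ring]; linarith)
  have hsigmoid : sigmoid (ckk - v) < Real.exp (ck - v) :=
    sigmoid_lt_exp_of_one_lt (by linarith)
  exact mul_lt_mul_of_pos_left (one_sub_sigmoid_mul_lt_sigmoid hsigmoid) hC

/-- Converse direction of the cut-point lemma: below the threshold, category `k`
is strictly more likely than category `k+1`. -/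
theorem stmt_18 (ck ckk v C : ℝ) (hc : ck < ckk) (hC : 0 < C)
    (hv : v < ck - Real.log (1 - Real.exp (-(ckk - ck)))) :
    C * ((1 - sigmoid (ck - v)) * sigmoid (ckk - v)) < C * sigmoid (ck - v) :=
  stmt_18_general ck ckk v C hC hv
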